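/- For f, g ∈ L¹(ℝ), the A-convolution satisfies ‖g ⋆_A f‖₁ ≤ (2π|b|)^{-1/2} ‖g‖₁ ‖f‖₁, so (L¹(ℝ), ⋆_A) is a commutative Banach algebra. -/

import Mathlib

/-!
The phase factor of `T^A_s` has modulus one, so `|g ⋆_A f| ≤ (2π|b|)^{-1/2} (|g| ⋆ |f|)` pointwise,
where `⋆` is the ordinary convolution; integrating, `‖|g| ⋆ |f|‖₁ = ‖g‖₁ ‖f‖₁` by Fubini.
-/

open MeasureTheory

/-- The `A`-translation `T^A_x f(t) = e^{-i(a/b)x(t-x)} f(t-x)`. -/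
noncomputable def Atrans (a b x : ℝ) (f : ℝ → ℂ) (t : ℝ) : ℂ :=
  Complex.exp (-Complex.I * ((a : ℂ) / b) * x * ((t : ℝ) - x)) * f (t - x)

/-- The `A`-convolution of two functions. -/
noncomputable def convA (a b : ℝ) (g f : ℝ → ℂ) (t : ℝ) : ℂ :=
  (Real.sqrt (2 * Real.pi * |b|) : ℂ)⁻¹ * ∫ s : ℝ, g s * Atrans a b s f t

open ContinuousLinearMap Convolution

section

variable (a b : ℝ)

theorem norm_Atrans (x : ℝ) (f : ℝ → ℂ) (t : ℝ) : ‖Atrans a b x f t‖ = ‖f (t - x)‖ := by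
  have h : -Complex.I * ((a : ℂ) / b) * x * ((t : ℂ) - x)
      = ((-(a / b) * x * (t - x) : ℝ) : ℂ) * Complex.I := by push_cast; ring
  rw [Atrans, norm_mul, h, Complex.norm_exp_ofReal_mul_I, one_mul]

theorem aestronglyMeasurable_mul_Atrans {g f : ℝ → ℂ} (hg : AEStronglyMeasurable g)
    (hf : AEStronglyMeasurable f) :
    AEStronglyMeasurable (fun p : ℝ × ℝ => g p.2 * Atrans a b p.2 f p.1)
      ((volume : Measure ℝ).prod volume) := by
  have hphase : Continuous fun p : ℝ × ℝ =>
      Complex.exp (-Complex.I * ((a : ℂ) / b) * p.2 * ((p.1 : ℂ) - p.2)) := by fun_prop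
  convert hphase.aestronglyMeasurable.mul (hg.convolution_integrand (mul ℂ ℂ) hf) using 1
  funext p
  simp only [Atrans, Pi.mul_apply, mul_apply']
  ring

theorem aestronglyMeasurable_convA {g f : ℝ → ℂ} (hg : AEStronglyMeasurable g)
    (hf : AEStronglyMeasurable f) :
    AEStronglyMeasurable (convA a b g f) :=
  aestronglyMeasurable_const.mul (aestronglyMeasurable_mul_Atrans a b hg hf).integral_prod_right'

theorem norm_convA_le (g f : ℝ → ℂ) (t : ℝ) :
    ‖convA a b g f t‖ ≤ (Real.sqrt (2 * Real.pi * |b|))⁻¹ *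
      ((fun s => ‖g s‖) ⋆[mul ℝ ℝ] fun s => ‖f s‖) t := by
  rw [convA, norm_mul, norm_inv, Complex.norm_real, Real.norm_of_nonneg (Real.sqrt_nonneg _),
    convolution_def]
  gcongr
  refine (norm_integral_le_integral_norm _).trans_eq ?_
  simp only [norm_mul, norm_Atrans, mul_apply']

end

theorem convA_norm_le_general (a b : ℝ) (g f : ℝ → ℂ)
    (hg : Integrable g) (hf : Integrable f) :
    Integrable (convA a b g f) ∧
      (∫ t : ℝ, ‖convA a b g f t‖) ≤
        (Real.sqrt (2 * Real.pi * |b|))⁻¹ * (∫ s : ℝ, ‖g s‖) * ∫ t : ℝ, ‖f t‖ := by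
  have hconv := (hg.norm.integrable_convolution (mul ℝ ℝ) hf.norm).const_mul
    (Real.sqrt (2 * Real.pi * |b|))⁻¹
  refine ⟨hconv.mono' (aestronglyMeasurable_convA a b hg.1 hf.1)
    (ae_of_all _ (norm_convA_le a b g f)), ?_⟩
  calc (∫ t : ℝ, ‖convA a b g f t‖)
      ≤ ∫ t, (Real.sqrt (2 * Real.pi * |b|))⁻¹ *
          ((fun s => ‖g s‖) ⋆[mul ℝ ℝ] fun s => ‖f s‖) t :=
        integral_mono_of_nonneg (ae_of_all _ fun _ => norm_nonneg _) hconv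
          (ae_of_all _ (norm_convA_le a b g f))
    _ = (Real.sqrt (2 * Real.pi * |b|))⁻¹ * (∫ s : ℝ, ‖g s‖) * ∫ t : ℝ, ‖f t‖ := by
        rw [integral_const_mul, integral_convolution (mul ℝ ℝ) hg.norm hf.norm, mul_apply',
          ← mul_assoc]

/-- `‖g ⋆_A f‖₁ ≤ (2π|b|)^{-1/2} ‖g‖₁ ‖f‖₁`. -/
theorem convA_norm_le (a b : ℝ) (hb : b ≠ 0) (g f : ℝ → ℂ)
    (hg : Integrable g) (hf : Integrable f) :
    Integrable (convA a b g f) ∧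
      (∫ t : ℝ, ‖convA a b g f t‖) ≤
        (Real.sqrt (2 * Real.pi * |b|))⁻¹ * (∫ s : ℝ, ‖g s‖) * ∫ t : ℝ, ‖f t‖ :=
  convA_norm_le_general a b g f hg hf
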